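/- Stuttering invariance, state form: under the hypotheses of the stuttering setup, at any point of the execution E, if the state contains s then the corresponding state in E' equals the state of E with s erased, and if the state does not contain s then the two states are equal. -/

import Mathlib

/-!
Consistency of `F` means that erasing an element `F` does not choose leaves its choice unchanged:
if `F l = a` but `F (l.erase s) = b ≠ a`, then `a` and `b` occur in the same order in both lists,
and one of the two choices contradicts consistency. Since every item is inserted at most once, `s`
belongs to the state of `E` after `k` steps exactly when `i < k ≤ j`, so `F` does not pick `s` at
any removal strictly between steps `i` and `j`. There `E'` makes the same choices as `E` and its
state is that of `E` with `s` erased; outside that window `s` is absent and the states coincide.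
-/

/-- `a` occurs (strictly) before `b` in the list `l`. -/
def Before {α : Type*} (a b : α) (l : List α) : Prop :=
  ∃ l₁ l₂ l₃ : List α, l = l₁ ++ a :: (l₂ ++ b :: l₃)

/-- A consistent choice function on lists. -/
structure ConsistentF {α : Type*} (F : List α → Option α) : Prop where
  empty : F [] = none
  mem : ∀ l : List α, l.Nodup → l ≠ [] → ∃ x ∈ l, F l = some x
  cons : ∀ l₁ l₂ : List α, l₁.Nodup → l₂.Nodup → ∀ a b : α, a ≠ b →
    Before a b l₁ → F l₁ = some a → Before a b l₂ → F l₂ ≠ some b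

/-- Operations on a consistent set. -/
inductive Op (α : Type*) where
  | ins : α → Op α
  | rem : Op α

/-- Apply one operation to the list state: insert appends, remove erases `F state`. -/
def applyOp {α : Type*} [DecidableEq α] (F : List α → Option α) (s : List α) : Op α → List α
  | .ins x => s ++ [x]
  | .rem => match F s with | none => s | some x => s.erase x

/-- The state after executing the first `k` operations of `E`, starting from `[]`. -/
def stateAt {α : Type*} [DecidableEq α] (F : List α → Option α) (E : List (Op α)) (k : ℕ) :
    List α :=
  (E.take k).foldl (applyOp F) []

/-- The items inserted during an execution, in order. -/
def insertedItems {α : Type*} : List (Op α) → List α :=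
  List.filterMap fun o => match o with | .ins x => some x | .rem => none

section

open List

variable {α : Type*}

theorem before_iff_sublist {a b : α} {l : List α} : Before a b l ↔ [a, b] <+ l := by
  constructor
  · rintro ⟨l₁, l₂, l₃, rfl⟩
    simp
  · intro h
    obtain ⟨r₁, r₂, rfl, ha, hb⟩ := append_sublist_iff.mp (show [a] ++ [b] <+ l from h)
    obtain ⟨x, y, rfl⟩ := append_of_mem (singleton_sublist.mp ha)
    obtain ⟨z, w, rfl⟩ := append_of_mem (singleton_sublist.mp hb)
    exact ⟨x, y ++ z, w, by simp⟩

theorem before_or_before_of_ne {a b : α} {l : List α} (ha : a ∈ l) (hb : b ∈ l) (hab : a ≠ b) :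
    Before a b l ∨ Before b a l := by
  obtain ⟨l₁, l₂, rfl⟩ := append_of_mem ha
  rcases mem_append.mp hb with hb₁ | hb₂
  · obtain ⟨u, v, rfl⟩ := append_of_mem hb₁
    exact Or.inr ⟨u, v, l₂, by simp⟩
  · obtain ⟨u, v, rfl⟩ := append_of_mem ((mem_cons.mp hb₂).resolve_left (Ne.symm hab))
    exact Or.inl ⟨l₁, u, v, rfl⟩

theorem Before.erase [DecidableEq α] {a b s : α} {l : List α} (h : Before a b l) (ha : a ≠ s)
    (hb : b ≠ s) : Before a b (l.erase s) := by
  rw [before_iff_sublist] at h ⊢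
  simpa [ha, hb] using h.erase s

namespace ConsistentF

variable {F : List α → Option α}

theorem mem_of_eq_some (hF : ConsistentF F) {l : List α} (hl : l.Nodup) {x : α}
    (h : F l = some x) : x ∈ l := by
  obtain ⟨y, hy, hFy⟩ := hF.mem l hl (by rintro rfl; simp [hF.empty] at h)
  exact Option.some.inj (hFy.symm.trans h) ▸ hy

theorem apply_erase [DecidableEq α] (hF : ConsistentF F) {l : List α} (hl : l.Nodup) {s : α}
    (hs : F l ≠ some s) : F (l.erase s) = F l := by
  cases hFl : F l with
  | none =>
    obtain rfl : l = [] := by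
      by_contra hne
      obtain ⟨x, -, hx⟩ := hF.mem l hl hne
      simp [hx] at hFl
    simp [hFl]
  | some a =>
    have has : a ≠ s := by rintro rfl; exact hs hFl
    have hal : a ∈ l := hF.mem_of_eq_some hl hFl
    have hl' : (l.erase s).Nodup := hl.erase s
    obtain ⟨b, hb, hFb⟩ := hF.mem _ hl' (ne_nil_of_mem ((mem_erase_of_ne has).mpr hal))
    obtain ⟨hbs, hbl⟩ := hl.mem_erase_iff.mp hb
    by_contra hne
    have hab : a ≠ b := by rintro rfl; exact hne hFb
    rcases before_or_before_of_ne hal hbl hab with h | h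
    · exact hF.cons l _ hl hl' a b hab h hFl (h.erase has hbs) hFb
    · exact hF.cons _ l hl' hl b a hab.symm (h.erase hbs has) hFb h hFl

end ConsistentF

section Positions

variable {E : List (Op α)} {i j k : ℕ}

theorem eq_of_getElem?_eq_ins (hnd : (insertedItems E).Nodup) {m n : ℕ} {x : α}
    (hm : E[m]? = some (.ins x)) (hn : E[n]? = some (.ins x)) : m = n := by
  induction E generalizing m n with
  | nil => simp at hm
  | cons o E ih =>
    have htail : (insertedItems E).Nodup :=
      hnd.sublist (by cases o <;> simp [insertedItems])
    have hhead (k : ℕ) (h₀ : (o :: E)[0]? = some (.ins x)) (hk : E[k]? = some (.ins x)) :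
        False := by
      obtain rfl : o = .ins x := by simpa using h₀
      exact (nodup_cons.mp hnd).1 (mem_filterMap.mpr ⟨_, mem_of_getElem? hk, rfl⟩)
    cases m <;> cases n
    · rfl
    · exact (hhead _ hm hn).elim
    · exact (hhead _ hn hm).elim
    · exact congrArg (· + 1) (ih htail hm hn)

def idxAfterErase (i j k : ℕ) : ℕ :=
  if k ≤ i then k else if k ≤ j then k - 1 else k - 2

theorem idxAfterErase_succ (hij : i < j) (hki : k ≠ i) (hkj : k ≠ j) :
    idxAfterErase i j (k + 1) = idxAfterErase i j k + 1 := by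
  unfold idxAfterErase
  split_ifs <;> omega

theorem idxAfterErase_succ_of_eq (hij : i < j) (hk : k = i ∨ k = j) :
    idxAfterErase i j (k + 1) = idxAfterErase i j k := by
  unfold idxAfterErase
  split_ifs <;> omega

theorem getElem?_eraseIdx_eraseIdx (hij : i < j) (hki : k ≠ i) (hkj : k ≠ j) :
    ((E.eraseIdx j).eraseIdx i)[idxAfterErase i j k]? = E[k]? := by
  unfold idxAfterErase
  split_ifs <;> simp only [getElem?_eraseIdx] <;> split_ifs <;> congr 1 <;> omega

end Positions

section Execution

variable [DecidableEq α] {F : List α → Option α} {E : List (Op α)} {s : α} {i j k : ℕ}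

theorem applyOp_rem_sublist (u : List α) : applyOp F u .rem <+ u := by
  simp only [applyOp]
  cases F u <;> simp [erase_sublist]

theorem not_mem_applyOp {u : List α} {o : Op α} (hs : s ∉ u) (ho : o ≠ .ins s) :
    s ∉ applyOp F u o := by
  cases o with
  | ins x =>
    simp only [applyOp, mem_append, mem_singleton, not_or]
    exact ⟨hs, fun h => ho (h ▸ rfl)⟩
  | rem => exact fun h => hs ((applyOp_rem_sublist u).subset h)

theorem applyOp_erase (hF : ConsistentF F) {u : List α} (hu : u.Nodup) {o : Op α}
    (ho : o ≠ .ins s) (hkeep : s ∈ u → s ∈ applyOp F u o) :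
    applyOp F (u.erase s) o = (applyOp F u o).erase s := by
  cases o with
  | ins x =>
    have hx : x ≠ s := fun h => ho (h ▸ rfl)
    by_cases hs : s ∈ u
    · simp [applyOp, erase_append_left _ hs]
    · simp [applyOp, erase_append_right _ hs, erase_of_not_mem hs, hx]
  | rem =>
    have hFu : F u ≠ some s := by
      intro h
      have hs := hkeep (hF.mem_of_eq_some hu h)
      simp only [applyOp, h] at hs
      exact hu.not_mem_erase hs
    simp only [applyOp, hF.apply_erase hu hFu]
    cases F u with
    | none => rfl
    | some a => exact erase_comm s a

theorem stateAt_succ (k : ℕ) :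
    stateAt F E (k + 1) = E[k]?.toList.foldl (applyOp F) (stateAt F E k) := by
  simp only [stateAt, take_add_one, foldl_append]

theorem stateAt_succ_of_getElem? {o : Op α} (h : E[k]? = some o) :
    stateAt F E (k + 1) = applyOp F (stateAt F E k) o := by
  simp [stateAt_succ, h]

theorem foldl_applyOp_sublist (l : List (Op α)) (u : List α) :
    l.foldl (applyOp F) u <+ u ++ insertedItems l := by
  induction l generalizing u with
  | nil => simp [insertedItems]
  | cons o l ih =>
    cases o with
    | ins x => simpa [insertedItems, applyOp] using ih (u ++ [x])
    | rem => simpa [insertedItems] using (ih _).trans ((applyOp_rem_sublist u).append_right _)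

theorem stateAt_sublist_insertedItems (k : ℕ) :
    stateAt F E k <+ insertedItems E :=
  (foldl_applyOp_sublist _ []).trans ((take_sublist k E).filterMap _)

theorem stateAt_nodup (hnd : (insertedItems E).Nodup) (k : ℕ) : (stateAt F E k).Nodup :=
  (stateAt_sublist_insertedItems k).nodup hnd

theorem not_mem_stateAt_of_le {n : ℕ} (hkn : k ≤ n) (hk : s ∉ stateAt F E k)
    (hins : ∀ m, k ≤ m → m < n → E[m]? ≠ some (.ins s)) : s ∉ stateAt F E n := by
  induction n, hkn using Nat.le_induction with
  | base => exact hk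
  | succ n hkn ih =>
    have ih := ih fun m h₁ h₂ => hins m h₁ (by omega)
    rw [stateAt_succ]
    cases h : E[n]? with
    | none => exact ih
    | some o => exact not_mem_applyOp ih fun ho => hins n hkn (by omega) (ho ▸ h)

theorem mem_stateAt_iff (hF : ConsistentF F) (hnd : (insertedItems E).Nodup)
    (hi : E[i]? = some (.ins s)) (hij : i < j) (hjrem : E[j]? = some .rem)
    (hret : F (stateAt F E j) = some s) : s ∈ stateAt F E k ↔ i < k ∧ k ≤ j := by
  have hins {m : ℕ} (hm : m ≠ i) : E[m]? ≠ some (.ins s) :=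
    fun h => hm (eq_of_getElem?_eq_ins hnd h hi)
  have hsj : s ∈ stateAt F E j := hF.mem_of_eq_some (stateAt_nodup hnd j) hret
  have hsj' : s ∉ stateAt F E (j + 1) := by
    simpa [stateAt_succ_of_getElem? hjrem, applyOp, hret] using
      (stateAt_nodup hnd j).not_mem_erase
  constructor
  · intro hs
    by_contra h
    rcases le_or_gt k i with hki | hik
    · exact not_mem_stateAt_of_le (Nat.zero_le k) (by simp [stateAt])
        (fun m _ hm => hins (by omega)) hs
    · exact not_mem_stateAt_of_le (by omega) hsj' (fun m hm _ => hins (by omega)) hs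
  · rintro ⟨hik, hkj⟩
    by_contra hs
    exact not_mem_stateAt_of_le hkj hs (fun m hm _ => hins (by omega)) hsj

theorem stateAt_eraseIdx_eraseIdx (hF : ConsistentF F) (hnd : (insertedItems E).Nodup)
    (hi : E[i]? = some (.ins s)) (hij : i < j) (hjrem : E[j]? = some .rem)
    (hret : F (stateAt F E j) = some s) (hk : k ≤ E.length) :
    stateAt F ((E.eraseIdx j).eraseIdx i) (idxAfterErase i j k) = (stateAt F E k).erase s := by
  have hmem (m : ℕ) := mem_stateAt_iff (k := m) hF hnd hi hij hjrem hret
  induction k with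
  | zero => simp [idxAfterErase, stateAt]
  | succ k ih =>
    have ih := ih (by omega)
    have hnd' : (stateAt F E k).Nodup := stateAt_nodup hnd k
    obtain ⟨o, ho⟩ : ∃ o, E[k]? = some o := ⟨E[k], getElem?_eq_getElem (by omega)⟩
    rw [stateAt_succ_of_getElem? ho]
    by_cases hki : k = i
    · obtain rfl : o = .ins s := by simpa [hki, hi] using ho.symm
      have hs : s ∉ stateAt F E k := fun h => by have := (hmem k).mp h; omega
      rw [idxAfterErase_succ_of_eq hij (.inl hki), ih, applyOp, erase_append_right _ hs]
      simp [erase_of_not_mem hs]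
    by_cases hkj : k = j
    · subst hkj
      obtain rfl : o = .rem := by simpa [hjrem] using ho.symm
      rw [idxAfterErase_succ_of_eq hij (.inr rfl), ih, applyOp, hret,
        erase_of_not_mem hnd'.not_mem_erase]
    · rw [idxAfterErase_succ hij hki hkj,
        stateAt_succ_of_getElem? ((getElem?_eraseIdx_eraseIdx hij hki hkj).trans ho), ih]
      refine applyOp_erase hF hnd' (fun h => hki (eq_of_getElem?_eq_ins hnd (h ▸ ho) hi)) ?_
      rw [← stateAt_succ_of_getElem? ho, hmem, hmem]
      omega

end Execution

end

theorem stmt9_general {α : Type*} [DecidableEq α] (F : List α → Option α) (hF : ConsistentF F)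
    (E : List (Op α)) (hnd : (insertedItems E).Nodup)
    (i j : ℕ) (hij : i < j)
    (s : α) (hi : E[i]? = some (Op.ins s)) (hjrem : E[j]? = some Op.rem)
    (hret : F (stateAt F E j) = some s)
    (E' : List (Op α)) (hE' : E' = (E.eraseIdx j).eraseIdx i) :
    ∀ k, k ≤ E.length →
      (s ∈ stateAt F E k →
        stateAt F E' (if k ≤ i then k else if k ≤ j then k - 1 else k - 2) =
          (stateAt F E k).erase s) ∧
      (s ∉ stateAt F E k →
        stateAt F E' (if k ≤ i then k else if k ≤ j then k - 1 else k - 2) =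
          stateAt F E k) := by
  subst hE'
  intro k hk
  have h := stateAt_eraseIdx_eraseIdx hF hnd hi hij hjrem hret hk
  exact ⟨fun _ => h, fun hs => h.trans (List.erase_of_not_mem hs)⟩

theorem stmt9 {α : Type*} [DecidableEq α] (F : List α → Option α) (hF : ConsistentF F)
    (E : List (Op α)) (hnd : (insertedItems E).Nodup)
    (i j : ℕ) (hij : i < j) (hj : j < E.length)
    (s : α) (hi : E[i]? = some (Op.ins s)) (hjrem : E[j]? = some Op.rem)
    (hret : F (stateAt F E j) = some s)
    (E' : List (Op α)) (hE' : E' = (E.eraseIdx j).eraseIdx i) :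
    ∀ k, k ≤ E.length →
      (s ∈ stateAt F E k →
        stateAt F E' (if k ≤ i then k else if k ≤ j then k - 1 else k - 2) =
          (stateAt F E k).erase s) ∧
      (s ∉ stateAt F E k →
        stateAt F E' (if k ≤ i then k else if k ≤ j then k - 1 else k - 2) =
          stateAt F E k) :=
  stmt9_general F hF E hnd i j hij s hi hjrem hret E' hE'
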